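/- Let α > 0, σ ∈ ℝ, σ_h := σ/(1+α‖h‖²), T > 0 and C ≥ 0. Let A_k : [0,T] → M₃(ℝ) (k ∈ ℤ³\{0}) be continuous functions such that each A_k(t) is symmetric positive semidefinite, Σ_{k≠0} Tr(A_k(t)) ≤ C for every t, A_k(0) = 0, and for every k ≠ 0 and t ∈ [0,T]: A_k(t) = ∫₀ᵗ Σ_{h∈ℤ³, h≠0, h≠k} σ_h² ‖P_h(k)‖² ( 2 P_k A_{k−h}(s) P_k − P_k P_{k−h} A_k(s) − A_k(s) P_{k−h} P_k ) ds. Then, setting B_j := ∫₀^T A_j(t) dt for each nonzero j ∈ ℤ³, one has for every nonzero k: A_k(T) = Σ_{h∈ℤ³, h≠0, h≠k} σ_h² ‖P_h(k)‖² ( 2 P_k B_{k−h} P_k − P_k P_{k−h} B_k − B_k P_{k−h} P_k ), the series on the right converging absolutely. -/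

import Mathlib

open scoped BigOperators

set_option maxHeartbeats 1000000

noncomputable section

/-- The lattice `ℤ³`. -/
abbrev Z3 := Fin 3 → ℤ
/-- `ℝ³` with its Euclidean norm. -/
abbrev R3 := EuclideanSpace ℝ (Fin 3)

/-- A lattice vector regarded as an element of `ℝ³`. -/
def latR (k : Z3) : R3 := WithLp.toLp 2 (fun j => (k j : ℝ))

/-- Squared Euclidean norm `‖k‖²` of a lattice vector `k`. -/
def nsq (k : Z3) : ℝ := ∑ j, ((k j : ℝ))^2

/-- Orthogonal projection of `ℝ³` onto the orthogonal complement of the lattice vector `h`. -/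
def PkR (h : Z3) (v : R3) : R3 := v - ((∑ j, v j * (h j : ℝ)) / nsq h) • latR h

/-- `‖P_h(k)‖`: the Euclidean norm of the projection of the lattice vector `k`
onto the orthogonal complement of the lattice vector `h`. -/
def projNorm (h k : Z3) : ℝ := ‖PkR h (latR k)‖

/-- The real symmetric `3×3` matrix `P_k = Id - k kᵀ/‖k‖²` of the orthogonal projection of `ℝ³`
onto the orthogonal complement of the lattice vector `k`. -/
def Pmat (k : Z3) : Matrix (Fin 3) (Fin 3) ℝ :=
  1 - (nsq k)⁻¹ • Matrix.vecMulVec (fun j => (k j : ℝ)) (fun j => (k j : ℝ))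

attribute [local instance] Matrix.normedAddCommGroup Matrix.normedSpace

namespace CovAux

open MeasureTheory intervalIntegral

abbrev M3 := Matrix (Fin 3) (Fin 3) ℝ

instance instENMM3 : ENormedAddCommMonoid (Matrix (Fin 3) (Fin 3) ℝ) :=
  (inferInstance : ENormedAddCommMonoid (Fin 3 → Fin 3 → ℝ))

instance instPMM3 : TopologicalSpace.PseudoMetrizableSpace (Matrix (Fin 3) (Fin 3) ℝ) :=
  (inferInstance : TopologicalSpace.PseudoMetrizableSpace (Fin 3 → Fin 3 → ℝ))

lemma nsq_nonneg (k : Z3) : 0 ≤ nsq k := Finset.sum_nonneg fun _ _ => sq_nonneg _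

lemma sq_le_nsq (k : Z3) (j : Fin 3) : ((k j : ℝ))^2 ≤ nsq k :=
  Finset.single_le_sum (f := fun i => ((k i : ℝ))^2) (fun _ _ => sq_nonneg _) (Finset.mem_univ j)

lemma nsq_pos {k : Z3} (hk : k ≠ 0) : 0 < nsq k := by
  obtain ⟨j, hj⟩ : ∃ j, k j ≠ 0 := by
    by_contra hcon; push_neg at hcon; exact hk (funext hcon)
  have h1 : (0:ℝ) < ((k j : ℝ))^2 := by
    have : (k j : ℝ) ≠ 0 := Int.cast_ne_zero.mpr hj
    positivity
  exact lt_of_lt_of_le h1 (sq_le_nsq k j)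

lemma norm_latR (k : Z3) : ‖latR k‖ = Real.sqrt (nsq k) := by
  rw [EuclideanSpace.norm_eq, nsq]
  congr 1
  refine Finset.sum_congr rfl fun j _ => ?_
  rw [Real.norm_eq_abs, sq_abs]
  rfl

lemma projNorm_sq_le {h : Z3} (hh : h ≠ 0) (k : Z3) : (projNorm h k)^2 ≤ 4 * nsq k := by
  have hb : projNorm h k ≤ 2 * Real.sqrt (nsq k) := by
    unfold projNorm PkR
    have hlh : 0 < ‖latR h‖ := by
      rw [norm_latR]; exact Real.sqrt_pos.mpr (nsq_pos hh)
    have hnh : nsq h = ‖latR h‖ ^ 2 := by rw [norm_latR, Real.sq_sqrt (nsq_nonneg h)]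
    have hinner : (∑ j, (latR k) j * ((h j : ℝ))) = inner ℝ (latR k) (latR h) := by
      rw [PiLp.inner_apply]
      simp [latR, RCLike.inner_apply, mul_comm]
    have hCS : |(inner ℝ (latR k) (latR h) : ℝ)| ≤ ‖latR k‖ * ‖latR h‖ :=
      abs_real_inner_le_norm _ _
    calc ‖latR k - ((∑ j, (latR k) j * ((h j : ℝ))) / nsq h) • latR h‖
        ≤ ‖latR k‖ + ‖((∑ j, (latR k) j * ((h j : ℝ))) / nsq h) • latR h‖ := norm_sub_le _ _
      _ ≤ ‖latR k‖ + ‖latR k‖ := by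
          have : ‖((∑ j, (latR k) j * ((h j : ℝ))) / nsq h) • latR h‖ ≤ ‖latR k‖ := by
            rw [norm_smul, Real.norm_eq_abs, hinner, abs_div, hnh]
            rw [abs_of_nonneg (by positivity : (0:ℝ) ≤ ‖latR h‖^2)]
            rw [div_mul_eq_mul_div, div_le_iff₀ (by positivity)]
            calc |(inner ℝ (latR k) (latR h) : ℝ)| * ‖latR h‖
                ≤ (‖latR k‖ * ‖latR h‖) * ‖latR h‖ :=
                  mul_le_mul_of_nonneg_right hCS (norm_nonneg _)
              _ = ‖latR k‖ * ‖latR h‖^2 := by ring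
          linarith
      _ = 2 * Real.sqrt (nsq k) := by rw [norm_latR]; ring
  have h0 : 0 ≤ projNorm h k := norm_nonneg _
  have hs : 0 ≤ Real.sqrt (nsq k) := Real.sqrt_nonneg _
  have hss : Real.sqrt (nsq k) ^ 2 = nsq k := Real.sq_sqrt (nsq_nonneg k)
  nlinarith

lemma entry_abs_le (M : M3) (i j : Fin 3) : |M i j| ≤ ‖M‖ :=
  M.norm_entry_le_entrywise_sup_norm

lemma norm_mul3 (P N : M3) : ‖P * N‖ ≤ 3 * (‖P‖ * ‖N‖) := by
  rw [Matrix.norm_le_iff (by positivity)]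
  intro i j
  rw [Matrix.mul_apply, Real.norm_eq_abs]
  calc |∑ l, P i l * N l j| ≤ ∑ l, |P i l * N l j| := Finset.abs_sum_le_sum_abs _ _
    _ ≤ ∑ _l : Fin 3, ‖P‖ * ‖N‖ := Finset.sum_le_sum fun l _ => by
        rw [abs_mul]
        exact mul_le_mul (entry_abs_le ..) (entry_abs_le ..) (abs_nonneg _) (norm_nonneg _)
    _ = 3 * (‖P‖ * ‖N‖) := by simp [Finset.sum_const]

lemma norm_Pmat_le {k : Z3} (hk : k ≠ 0) : ‖Pmat k‖ ≤ 2 := by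
  rw [Matrix.norm_le_iff (by norm_num)]
  intro i j
  have hq := nsq_pos hk
  have h1 : |(1 : M3) i j| ≤ 1 := by
    by_cases hij : i = j <;> simp [Matrix.one_apply, hij]
  have h2 : |(k i : ℝ) * (k j : ℝ)| ≤ nsq k := by
    have hi := sq_le_nsq k i; have hj := sq_le_nsq k j
    rw [abs_mul]
    nlinarith [abs_nonneg ((k i : ℝ)), abs_nonneg ((k j : ℝ)), sq_abs ((k i : ℝ)),
      sq_abs ((k j : ℝ))]
  have he : Pmat k i j = (1 : M3) i j - (nsq k)⁻¹ * ((k i : ℝ) * (k j : ℝ)) := by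
    simp [Pmat, Matrix.vecMulVec_apply, Matrix.sub_apply]
  rw [Real.norm_eq_abs, he]
  calc |(1 : M3) i j - (nsq k)⁻¹ * ((k i : ℝ) * (k j : ℝ))|
      ≤ |(1 : M3) i j| + |(nsq k)⁻¹ * ((k i : ℝ) * (k j : ℝ))| := abs_sub _ _
    _ ≤ 1 + 1 := by
        refine add_le_add h1 ?_
        rw [abs_mul, abs_of_nonneg (by positivity : (0:ℝ) ≤ (nsq k)⁻¹)]
        rw [inv_mul_le_iff₀ hq]
        simpa using h2
    _ = 2 := by norm_num

lemma sum_ite_right {i j : Fin 3} (hij : i ≠ j) (c : ℝ) (w : Fin 3 → ℝ) :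
    ∑ l, w l * (if l = i then 1 else if l = j then c else 0) = w i + c * w j := by
  have key : ∀ l, w l * (if l = i then 1 else if l = j then c else 0)
      = (if l = i then w l else 0) + (if l = j then c * w l else 0) := by
    intro l
    by_cases h1 : l = i
    · subst h1
      rw [if_pos rfl, if_pos rfl, if_neg hij]
      ring
    · rw [if_neg h1, if_neg h1]
      by_cases h2 : l = j
      · subst h2
        rw [if_pos rfl, if_pos rfl]
        ring
      · rw [if_neg h2, if_neg h2]
        ring
  simp only [key, Finset.sum_add_distrib, Finset.sum_ite_eq' Finset.univ, Finset.mem_univ,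
    if_true]

lemma sum_ite_left {i j : Fin 3} (hij : i ≠ j) (c : ℝ) (w : Fin 3 → ℝ) :
    ∑ l, (if l = i then 1 else if l = j then c else 0) * w l = w i + c * w j := by
  rw [← sum_ite_right hij c w]
  exact Finset.sum_congr rfl fun l _ => mul_comm _ _

lemma quad {M : M3} (hp : M.PosSemidef) {i j : Fin 3} (hij : i ≠ j) (c : ℝ) :
    0 ≤ M i i + c * (M i j + M j i) + c^2 * M j j := by
  have h := hp.dotProduct_mulVec_nonneg (fun l => if l = i then (1:ℝ) else if l = j then c else 0)
  have hst : star (fun l => if l = i then (1:ℝ) else if l = j then c else 0)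
      = (fun l => if l = i then (1:ℝ) else if l = j then c else 0) := by
    funext l; simp
  rw [hst] at h
  simp only [dotProduct, Matrix.mulVec] at h
  have hmv : ∀ l, (∑ m, M l m * (if m = i then (1:ℝ) else if m = j then c else 0))
      = M l i + c * M l j := fun l => sum_ite_right hij c (M l)
  simp only [hmv] at h
  rw [sum_ite_left hij c (fun l => M l i + c * M l j)] at h
  nlinarith [h]

lemma diag_nonneg {M : M3} (hp : M.PosSemidef) (l : Fin 3) : 0 ≤ M l l := by
  obtain ⟨j, hj⟩ := exists_ne l
  have := quad hp (Ne.symm hj) 0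
  simpa using this

lemma trace_nonneg' {M : M3} (hp : M.PosSemidef) : 0 ≤ M.trace := by
  rw [Matrix.trace]
  exact Finset.sum_nonneg fun l _ => diag_nonneg hp l

lemma diag_le_trace {M : M3} (hp : M.PosSemidef) (l : Fin 3) : M l l ≤ M.trace := by
  rw [Matrix.trace]
  exact Finset.single_le_sum (f := fun l => M.diag l) (fun i _ => diag_nonneg hp i)
    (Finset.mem_univ l)

lemma entry_le_trace {M : M3} (hs : M.IsSymm) (hp : M.PosSemidef) (i j : Fin 3) :
    |M i j| ≤ M.trace := by
  by_cases hij : i = j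
  · subst hij
    rw [abs_of_nonneg (diag_nonneg hp i)]
    exact diag_le_trace hp i
  · have hsym : M j i = M i j := hs.apply i j
    have h1 := quad hp hij 1
    have h2 := quad hp hij (-1)
    have hii := diag_le_trace hp i
    have hjj := diag_le_trace hp j
    have hiin := diag_nonneg hp i
    have hjjn := diag_nonneg hp j
    rw [abs_le]
    constructor <;> nlinarith

lemma psd_norm_le_trace {M : M3} (hs : M.IsSymm) (hp : M.PosSemidef) : ‖M‖ ≤ M.trace := by
  rw [Matrix.norm_le_iff (trace_nonneg' hp)]
  intro i j
  rw [Real.norm_eq_abs]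
  exact entry_le_trace hs hp i j

lemma summable_f1 {α : ℝ} (hα : 0 < α) :
    Summable (fun n : ℤ => (1 + α * (n:ℝ)^2) ^ (-(2/3) : ℝ)) := by
  rw [← Finset.summable_compl_iff ({0} : Finset ℤ)]
  have hg : Summable (fun n : {x : ℤ // x ∉ ({0} : Finset ℤ)} =>
      α ^ (-(2/3) : ℝ) * |((n : ℤ) : ℝ)| ^ (-(4/3) : ℝ)) :=
    (Finset.summable_compl_iff _).mpr
      ((Real.summable_abs_int_rpow (by norm_num : (1:ℝ) < 4/3)).mul_left _)
  refine Summable.of_nonneg_of_le (fun n => Real.rpow_nonneg (by positivity) _) ?_ hg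
  rintro ⟨n, hn⟩
  have hn0 : n ≠ 0 := by simpa using hn
  have hnR : ((n : ℝ)) ≠ 0 := Int.cast_ne_zero.mpr hn0
  have h1 : (0:ℝ) < α * (n:ℝ)^2 := by positivity
  have h2 : α * (n:ℝ)^2 ≤ 1 + α * (n:ℝ)^2 := by linarith
  calc (1 + α * (n:ℝ)^2) ^ (-(2/3) : ℝ) ≤ (α * (n:ℝ)^2) ^ (-(2/3) : ℝ) :=
        Real.rpow_le_rpow_of_nonpos h1 h2 (by norm_num)
    _ = α ^ (-(2/3) : ℝ) * |(n:ℝ)| ^ (-(4/3) : ℝ) := by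
        rw [Real.mul_rpow hα.le (sq_nonneg _), ← sq_abs, ← Real.rpow_natCast |(n:ℝ)| 2,
          ← Real.rpow_mul (abs_nonneg _)]
        norm_num

def e3 : Z3 ≃ ℤ × ℤ × ℤ where
  toFun h := (h 0, h 1, h 2)
  invFun p := ![p.1, p.2.1, p.2.2]
  left_inv h := by funext l; fin_cases l <;> rfl
  right_inv p := rfl

lemma summable_prod3 {F : ℤ → ℝ} (hf1 : Summable F) (hnn : ∀ n, 0 ≤ F n) :
    Summable (fun h : Z3 => F (h 0) * (F (h 1) * F (h 2))) := by
  have hg : Summable (fun q : ℤ × ℤ => F q.1 * F q.2) :=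
    hf1.mul_of_nonneg hf1 (fun n => hnn n) (fun n => hnn n)
  have h2 : Summable (fun p : ℤ × ℤ × ℤ => F p.1 * (F p.2.1 * F p.2.2)) :=
    hf1.mul_of_nonneg hg (fun n => hnn n) (fun q => mul_nonneg (hnn _) (hnn _))
  exact (h2.comp_injective e3.injective).congr (fun h => rfl)

lemma summable_inv_sq {α : ℝ} (hα : 0 < α) :
    Summable (fun h : Z3 => ((1 + α * nsq h)^2)⁻¹) := by
  have hnn : ∀ n : ℤ, (0:ℝ) ≤ (1 + α * (n:ℝ)^2) ^ (-(2/3):ℝ) := fun n =>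
    Real.rpow_nonneg (by positivity) _
  refine Summable.of_nonneg_of_le (fun h => by positivity) ?_
    (summable_prod3 (summable_f1 hα) hnn)
  intro h
  set b : ℝ := 1 + α * nsq h with hb
  have hb1 : (1:ℝ) ≤ b := by
    have := nsq_nonneg h
    simp only [hb]
    nlinarith
  have hbp : (0:ℝ) < b := lt_of_lt_of_le one_pos hb1
  have hx : (0:ℝ) ≤ b ^ (-(2/3) : ℝ) := Real.rpow_nonneg hbp.le _
  have hkey : ((b^2)⁻¹ : ℝ) = (b ^ (-(2/3) : ℝ))^(3:ℕ) := by
    rw [← Real.rpow_natCast (b ^ (-(2/3):ℝ)) 3, ← Real.rpow_mul hbp.le]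
    norm_num
  have hle : ∀ j : Fin 3, b ^ (-(2/3) : ℝ) ≤ (1 + α * ((h j : ℝ))^2) ^ (-(2/3):ℝ) := by
    intro j
    refine Real.rpow_le_rpow_of_nonpos ?_ ?_ (by norm_num)
    · positivity
    · have := sq_le_nsq h j
      simp only [hb]
      nlinarith
  rw [hkey]
  calc (b ^ (-(2/3):ℝ))^(3:ℕ) = b ^ (-(2/3):ℝ) * (b ^ (-(2/3):ℝ) * b ^ (-(2/3):ℝ)) := by ring
    _ ≤ (1 + α * ((h 0 : ℝ))^2) ^ (-(2/3):ℝ) *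
        ((1 + α * ((h 1 : ℝ))^2) ^ (-(2/3):ℝ) * (1 + α * ((h 2 : ℝ))^2) ^ (-(2/3):ℝ)) :=
        mul_le_mul (hle 0) (mul_le_mul (hle 1) (hle 2) hx ((hx.trans (hle 1))))
          (mul_nonneg hx hx) ((hx.trans (hle 0)))

lemma comb_norm_le {P Q X Y : M3} {D : ℝ} (hD : 0 ≤ D) (hP : ‖P‖ ≤ 2) (hQ : ‖Q‖ ≤ 2)
    (hX : ‖X‖ ≤ D) (hY : ‖Y‖ ≤ D) :
    ‖2 • (P * X * P) - P * Q * Y - Y * Q * P‖ ≤ 144 * D := by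
  have hPn : (0:ℝ) ≤ ‖P‖ := norm_nonneg _
  have hQn : (0:ℝ) ≤ ‖Q‖ := norm_nonneg _
  have hXn : (0:ℝ) ≤ ‖X‖ := norm_nonneg _
  have hYn : (0:ℝ) ≤ ‖Y‖ := norm_nonneg _
  have h1 : ‖P * X * P‖ ≤ 36 * D := by
    calc ‖P * X * P‖ ≤ 3 * (‖P * X‖ * ‖P‖) := norm_mul3 _ _
      _ ≤ 36 * D := by
          have ha : ‖P * X‖ ≤ 6 * D := by
            nlinarith [norm_mul3 P X, mul_le_mul hP hX hXn (by norm_num : (0:ℝ) ≤ 2)]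
          nlinarith [mul_le_mul ha hP hPn (by linarith : (0:ℝ) ≤ 6 * D)]
  have h2 : ‖P * Q * Y‖ ≤ 36 * D := by
    calc ‖P * Q * Y‖ ≤ 3 * (‖P * Q‖ * ‖Y‖) := norm_mul3 _ _
      _ ≤ 36 * D := by
          have ha : ‖P * Q‖ ≤ 12 := by
            nlinarith [norm_mul3 P Q, mul_le_mul hP hQ hQn (by norm_num : (0:ℝ) ≤ 2)]
          nlinarith [mul_le_mul ha hY hYn (by norm_num : (0:ℝ) ≤ 12)]
  have h3 : ‖Y * Q * P‖ ≤ 36 * D := by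
    calc ‖Y * Q * P‖ ≤ 3 * (‖Y * Q‖ * ‖P‖) := norm_mul3 _ _
      _ ≤ 36 * D := by
          have ha : ‖Y * Q‖ ≤ 6 * D := by
            nlinarith [norm_mul3 Y Q, mul_le_mul hY hQ hQn hD]
          nlinarith [mul_le_mul ha hP hPn (by linarith : (0:ℝ) ≤ 6 * D)]
  have h4 : ‖(2:ℕ) • (P * X * P)‖ ≤ 72 * D := by
    rw [two_smul]
    calc ‖P * X * P + P * X * P‖ ≤ ‖P * X * P‖ + ‖P * X * P‖ := norm_add_le _ _
      _ ≤ 72 * D := by linarith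
  calc ‖2 • (P * X * P) - P * Q * Y - Y * Q * P‖
      ≤ ‖2 • (P * X * P) - P * Q * Y‖ + ‖Y * Q * P‖ := norm_sub_le _ _
    _ ≤ ‖2 • (P * X * P)‖ + ‖P * Q * Y‖ + ‖Y * Q * P‖ := by
        have := norm_sub_le (2 • (P * X * P)) (P * Q * Y)
        linarith
    _ ≤ 144 * D := by
        have he : ‖(2:ℕ) • (P * X * P)‖ = ‖2 • (P * X * P)‖ := rfl
        linarith [h4]

def mulLR (P Q : M3) : M3 →L[ℝ] M3 :=
  LinearMap.toContinuousLinearMap ((LinearMap.mulRight ℝ Q).comp (LinearMap.mulLeft ℝ P))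

lemma mulLR_apply (P Q X : M3) : mulLR P Q X = P * X * Q := rfl

def mulL (P : M3) : M3 →L[ℝ] M3 :=
  LinearMap.toContinuousLinearMap (LinearMap.mulLeft ℝ P)

lemma mulL_apply (P X : M3) : mulL P X = P * X := rfl

def mulR (Q : M3) : M3 →L[ℝ] M3 :=
  LinearMap.toContinuousLinearMap (LinearMap.mulRight ℝ Q)

lemma mulR_apply (Q X : M3) : mulR Q X = X * Q := rfl

end CovAux


/-- if the covariance matrices `A_k` solve, on `[0,T]`, the integral form of the
closed evolution system of the linear stochastic Leray-α model with `A_k(0) = 0`, a uniform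
trace bound and positive semidefiniteness, then, with `B_j = ∫₀ᵀ A_j(t) dt`, the equality
`A_k(T) = ∑_h σ_h² ‖P_h(k)‖² (2 P_k B_{k-h} P_k - P_k P_{k-h} B_k - B_k P_{k-h} P_k)` holds for
every nonzero `k`, the series converging absolutely. -/
theorem covariance_integrated_identity (α : ℝ) (hα : 0 < α) (σ : ℝ)
    (T : ℝ) (hT : 0 < T) (C : ℝ) (hC : 0 ≤ C)
    (A : Z3 → ℝ → Matrix (Fin 3) (Fin 3) ℝ)
    (hcont : ∀ k : Z3, k ≠ 0 → ContinuousOn (A k) (Set.Icc 0 T))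
    (hpsd : ∀ k : Z3, k ≠ 0 → ∀ t ∈ Set.Icc (0:ℝ) T, (A k t).IsSymm ∧ (A k t).PosSemidef)
    (htr : ∀ t ∈ Set.Icc (0:ℝ) T,
      Summable (fun k : {k : Z3 // k ≠ 0} => (A k.1 t).trace) ∧
      ∑' k : {k : Z3 // k ≠ 0}, (A k.1 t).trace ≤ C)
    (hA0 : ∀ k : Z3, k ≠ 0 → A k 0 = 0)
    (heq : ∀ k : Z3, k ≠ 0 → ∀ t ∈ Set.Icc (0:ℝ) T,
      A k t = ∫ s in (0:ℝ)..t,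
        ∑' h : {h : Z3 // h ≠ 0 ∧ h ≠ k},
          ((σ / (1 + α * nsq h.1))^2 * (projNorm h.1 k)^2) •
            (2 • (Pmat k * A (k - h.1) s * Pmat k)
              - Pmat k * Pmat (k - h.1) * A k s
              - A k s * Pmat (k - h.1) * Pmat k)) :
    ∀ k : Z3, k ≠ 0 →
      Summable (fun h : {h : Z3 // h ≠ 0 ∧ h ≠ k} =>
        ‖((σ / (1 + α * nsq h.1))^2 * (projNorm h.1 k)^2) •
          (2 • (Pmat k * (∫ t in (0:ℝ)..T, A (k - h.1) t) * Pmat k)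
            - Pmat k * Pmat (k - h.1) * (∫ t in (0:ℝ)..T, A k t)
            - (∫ t in (0:ℝ)..T, A k t) * Pmat (k - h.1) * Pmat k)‖) ∧
      A k T = ∑' h : {h : Z3 // h ≠ 0 ∧ h ≠ k},
        ((σ / (1 + α * nsq h.1))^2 * (projNorm h.1 k)^2) •
          (2 • (Pmat k * (∫ t in (0:ℝ)..T, A (k - h.1) t) * Pmat k)
            - Pmat k * Pmat (k - h.1) * (∫ t in (0:ℝ)..T, A k t)
            - (∫ t in (0:ℝ)..T, A k t) * Pmat (k - h.1) * Pmat k) := by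
  
  intro k hk
  have hTmem : T ∈ Set.Icc (0:ℝ) T := ⟨hT.le, le_refl T⟩
  have hkm : ∀ h : {h : Z3 // h ≠ 0 ∧ h ≠ k}, k - h.1 ≠ 0 := fun h =>
    sub_ne_zero.mpr (Ne.symm h.2.2)
  have htrace_le : ∀ j, j ≠ 0 → ∀ t ∈ Set.Icc (0:ℝ) T, (A j t).trace ≤ C := by
    intro j hj t ht
    exact le_trans (Summable.le_tsum (htr t ht).1 ⟨j, hj⟩
      (fun i _ => CovAux.trace_nonneg' (hpsd i.1 i.2 t ht).2)) (htr t ht).2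
  have hAb : ∀ j, j ≠ 0 → ∀ t ∈ Set.Icc (0:ℝ) T, ‖A j t‖ ≤ C := fun j hj t ht =>
    le_trans (CovAux.psd_norm_le_trace (hpsd j hj t ht).1 (hpsd j hj t ht).2)
      (htrace_le j hj t ht)
  have hII : ∀ j, j ≠ 0 → IntervalIntegrable (A j) MeasureTheory.volume 0 T := by
    intro j hj
    apply ContinuousOn.intervalIntegrable
    rw [Set.uIcc_of_le hT.le]
    exact hcont j hj
  have hBb : ∀ j, j ≠ 0 → ‖∫ t in (0:ℝ)..T, A j t‖ ≤ C * T := by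
    intro j hj
    have hb := intervalIntegral.norm_integral_le_of_norm_le_const (C := C) (f := A j)
      (a := 0) (b := T) ?_
    · rw [sub_zero, abs_of_nonneg hT.le] at hb
      exact hb
    · intro x hx
      rw [Set.uIoc_of_le hT.le] at hx
      exact hAb j hj x (Set.Ioc_subset_Icc_self hx)
  have hco_sum : Summable (fun h : {h : Z3 // h ≠ 0 ∧ h ≠ k} =>
      (σ / (1 + α * nsq h.1))^2 * (projNorm h.1 k)^2) := by
    have hbig : Summable (fun h : Z3 => σ^2 * (4 * nsq k) * ((1 + α * nsq h)^2)⁻¹) :=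
      (CovAux.summable_inv_sq hα).mul_left _
    have hsub : Summable (fun h : {h : Z3 // h ≠ 0 ∧ h ≠ k} =>
        σ^2 * (4 * nsq k) * ((1 + α * nsq h.1)^2)⁻¹) :=
      hbig.comp_injective Subtype.val_injective
    refine Summable.of_nonneg_of_le (fun h => by positivity) (fun h => ?_) hsub
    have h1 := CovAux.projNorm_sq_le h.2.1 k
    have hbp : (0:ℝ) < 1 + α * nsq h.1 := by nlinarith [CovAux.nsq_nonneg h.1]
    have hdd : (σ / (1 + α * nsq h.1))^2 = σ^2 * ((1 + α * nsq h.1)^2)⁻¹ := by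
      rw [div_pow, div_eq_mul_inv]
    rw [hdd]
    have hin : (0:ℝ) ≤ σ^2 * ((1 + α * nsq h.1)^2)⁻¹ := by positivity
    calc σ^2 * ((1 + α * nsq h.1)^2)⁻¹ * (projNorm h.1 k)^2
        ≤ σ^2 * ((1 + α * nsq h.1)^2)⁻¹ * (4 * nsq k) := mul_le_mul_of_nonneg_left h1 hin
      _ = σ^2 * (4 * nsq k) * ((1 + α * nsq h.1)^2)⁻¹ := by ring
  constructor
  · refine Summable.of_nonneg_of_le (fun h => norm_nonneg _) (fun h => ?_)
      (hco_sum.mul_right (144 * (C * T)))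
    rw [norm_smul, Real.norm_eq_abs, abs_of_nonneg (by positivity)]
    refine mul_le_mul_of_nonneg_left ?_ (by positivity)
    exact CovAux.comb_norm_le (mul_nonneg hC hT.le) (CovAux.norm_Pmat_le hk)
      (CovAux.norm_Pmat_le (hkm h)) (hBb _ (hkm h)) (hBb _ hk)
  · have hfc : ∀ h : {h : Z3 // h ≠ 0 ∧ h ≠ k}, ContinuousOn (fun s =>
        ((σ / (1 + α * nsq h.1))^2 * (projNorm h.1 k)^2) •
          (2 • (Pmat k * A (k - h.1) s * Pmat k)
            - Pmat k * Pmat (k - h.1) * A k s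
            - A k s * Pmat (k - h.1) * Pmat k)) (Set.Icc (0:ℝ) T) := by
      intro h
      have h1 := hcont _ (hkm h)
      have h2 := hcont _ hk
      refine ContinuousOn.fun_const_smul ?_ _
      exact ((((CovAux.mulLR (Pmat k) (Pmat k)).continuous.comp_continuousOn h1).const_smul
          (2:ℕ)).sub
        ((CovAux.mulL (Pmat k * Pmat (k - h.1))).continuous.comp_continuousOn h2)).sub
        (((CovAux.mulR (Pmat k)).comp (CovAux.mulR (Pmat (k - h.1)))).continuous.comp_continuousOn
          h2)
    have hmeas : ∀ h : {h : Z3 // h ≠ 0 ∧ h ≠ k}, MeasureTheory.AEStronglyMeasurable (fun s =>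
        ((σ / (1 + α * nsq h.1))^2 * (projNorm h.1 k)^2) •
          (2 • (Pmat k * A (k - h.1) s * Pmat k)
            - Pmat k * Pmat (k - h.1) * A k s
            - A k s * Pmat (k - h.1) * Pmat k))
        (MeasureTheory.volume.restrict (Set.Ioc (0:ℝ) T)) := fun h =>
      ContinuousOn.aestronglyMeasurable ((hfc h).mono Set.Ioc_subset_Icc_self) measurableSet_Ioc
    have hbound : ∀ h : {h : Z3 // h ≠ 0 ∧ h ≠ k}, ∀ s ∈ Set.Ioc (0:ℝ) T,
        ‖((σ / (1 + α * nsq h.1))^2 * (projNorm h.1 k)^2) •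
          (2 • (Pmat k * A (k - h.1) s * Pmat k)
            - Pmat k * Pmat (k - h.1) * A k s
            - A k s * Pmat (k - h.1) * Pmat k)‖
        ≤ ((σ / (1 + α * nsq h.1))^2 * (projNorm h.1 k)^2) * (144 * C) := by
      intro h s hs
      rw [norm_smul, Real.norm_eq_abs, abs_of_nonneg (by positivity)]
      refine mul_le_mul_of_nonneg_left ?_ (by positivity)
      exact CovAux.comb_norm_le hC (CovAux.norm_Pmat_le hk) (CovAux.norm_Pmat_le (hkm h))
        (hAb _ (hkm h) s (Set.Ioc_subset_Icc_self hs)) (hAb _ hk s (Set.Ioc_subset_Icc_self hs))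
    have hfin : (∑' h : {h : Z3 // h ≠ 0 ∧ h ≠ k}, ∫⁻ s, ‖((σ / (1 + α * nsq h.1))^2 *
        (projNorm h.1 k)^2) • (2 • (Pmat k * A (k - h.1) s * Pmat k)
            - Pmat k * Pmat (k - h.1) * A k s
            - A k s * Pmat (k - h.1) * Pmat k)‖₊
        ∂(MeasureTheory.volume.restrict (Set.Ioc (0:ℝ) T))) ≠ ⊤ := by
      have hper : ∀ h : {h : Z3 // h ≠ 0 ∧ h ≠ k}, (∫⁻ s, ‖((σ / (1 + α * nsq h.1))^2 *
          (projNorm h.1 k)^2) • (2 • (Pmat k * A (k - h.1) s * Pmat k)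
            - Pmat k * Pmat (k - h.1) * A k s
            - A k s * Pmat (k - h.1) * Pmat k)‖₊
          ∂(MeasureTheory.volume.restrict (Set.Ioc (0:ℝ) T)))
          ≤ ENNReal.ofReal (((σ / (1 + α * nsq h.1))^2 * (projNorm h.1 k)^2) * (144 * C)) *
            ENNReal.ofReal T := by
        intro h
        calc (∫⁻ s in Set.Ioc (0:ℝ) T, ‖((σ / (1 + α * nsq h.1))^2 *
            (projNorm h.1 k)^2) • (2 • (Pmat k * A (k - h.1) s * Pmat k)
              - Pmat k * Pmat (k - h.1) * A k s
              - A k s * Pmat (k - h.1) * Pmat k)‖₊)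
            ≤ ∫⁻ _s in Set.Ioc (0:ℝ) T, ENNReal.ofReal (((σ / (1 + α * nsq h.1))^2 *
              (projNorm h.1 k)^2) * (144 * C)) := by
              refine MeasureTheory.setLIntegral_mono measurable_const (fun s hs => ?_)
              rw [← enorm_eq_nnnorm, ← ofReal_norm]
              exact ENNReal.ofReal_le_ofReal (hbound h s hs)
          _ = ENNReal.ofReal (((σ / (1 + α * nsq h.1))^2 * (projNorm h.1 k)^2) * (144 * C)) *
              ENNReal.ofReal T := by
              rw [MeasureTheory.setLIntegral_const, Real.volume_Ioc, sub_zero]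
      refine ne_top_of_le_ne_top ?_ (ENNReal.tsum_le_tsum hper)
      rw [ENNReal.tsum_mul_right]
      refine ENNReal.mul_ne_top ?_ ENNReal.ofReal_ne_top
      rw [← ENNReal.ofReal_tsum_of_nonneg (fun h => by positivity) (hco_sum.mul_right _)]
      exact ENNReal.ofReal_ne_top
    have key : ∀ h : {h : Z3 // h ≠ 0 ∧ h ≠ k},
        (∫ s in Set.Ioc (0:ℝ) T, ((σ / (1 + α * nsq h.1))^2 * (projNorm h.1 k)^2) •
          (2 • (Pmat k * A (k - h.1) s * Pmat k)
            - Pmat k * Pmat (k - h.1) * A k s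
            - A k s * Pmat (k - h.1) * Pmat k))
        = ((σ / (1 + α * nsq h.1))^2 * (projNorm h.1 k)^2) •
          (2 • (Pmat k * (∫ t in (0:ℝ)..T, A (k - h.1) t) * Pmat k)
            - Pmat k * Pmat (k - h.1) * (∫ t in (0:ℝ)..T, A k t)
            - (∫ t in (0:ℝ)..T, A k t) * Pmat (k - h.1) * Pmat k) := by
      intro h
      set L1 : CovAux.M3 →L[ℝ] CovAux.M3 :=
        CovAux.mulLR (Pmat k) (Pmat k) + CovAux.mulLR (Pmat k) (Pmat k) with hL1
      set L2 : CovAux.M3 →L[ℝ] CovAux.M3 :=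
        CovAux.mulL (Pmat k * Pmat (k - h.1)) +
          (CovAux.mulR (Pmat k)).comp (CovAux.mulR (Pmat (k - h.1))) with hL2
      have hLeq : ∀ X Y : CovAux.M3,
          2 • (Pmat k * X * Pmat k) - Pmat k * Pmat (k - h.1) * Y - Y * Pmat (k - h.1) * Pmat k
          = L1 X - L2 Y := by
        intro X Y
        simp only [hL1, hL2, ContinuousLinearMap.add_apply, ContinuousLinearMap.comp_apply,
          CovAux.mulLR_apply, CovAux.mulL_apply, CovAux.mulR_apply, two_smul, sub_sub]
      have hi1 : IntervalIntegrable (fun s => L1 (A (k - h.1) s)) MeasureTheory.volume 0 T := by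
        apply ContinuousOn.intervalIntegrable
        rw [Set.uIcc_of_le hT.le]
        exact L1.continuous.comp_continuousOn (hcont _ (hkm h))
      have hi2 : IntervalIntegrable (fun s => L2 (A k s)) MeasureTheory.volume 0 T := by
        apply ContinuousOn.intervalIntegrable
        rw [Set.uIcc_of_le hT.le]
        exact L2.continuous.comp_continuousOn (hcont _ hk)
      rw [← intervalIntegral.integral_of_le hT.le]
      calc (∫ s in (0:ℝ)..T, ((σ / (1 + α * nsq h.1))^2 * (projNorm h.1 k)^2) •
            (2 • (Pmat k * A (k - h.1) s * Pmat k)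
              - Pmat k * Pmat (k - h.1) * A k s
              - A k s * Pmat (k - h.1) * Pmat k))
          = ∫ s in (0:ℝ)..T, ((σ / (1 + α * nsq h.1))^2 * (projNorm h.1 k)^2) •
            (L1 (A (k - h.1) s) - L2 (A k s)) := by
            congr 1
            funext s
            rw [hLeq]
        _ = ((σ / (1 + α * nsq h.1))^2 * (projNorm h.1 k)^2) •
            ∫ s in (0:ℝ)..T, (L1 (A (k - h.1) s) - L2 (A k s)) :=
            intervalIntegral.integral_smul _ _
        _ = ((σ / (1 + α * nsq h.1))^2 * (projNorm h.1 k)^2) •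
            (L1 (∫ t in (0:ℝ)..T, A (k - h.1) t) - L2 (∫ t in (0:ℝ)..T, A k t)) := by
            rw [intervalIntegral.integral_sub hi1 hi2]
            refine congrArg _ (congrArg₂ _ ?_ ?_)
            · exact L1.intervalIntegral_comp_comm (hII _ (hkm h))
            · exact L2.intervalIntegral_comp_comm (hII _ hk)
        _ = ((σ / (1 + α * nsq h.1))^2 * (projNorm h.1 k)^2) •
            (2 • (Pmat k * (∫ t in (0:ℝ)..T, A (k - h.1) t) * Pmat k)
              - Pmat k * Pmat (k - h.1) * (∫ t in (0:ℝ)..T, A k t)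
              - (∫ t in (0:ℝ)..T, A k t) * Pmat (k - h.1) * Pmat k) := by
            rw [hLeq]
    calc A k T = ∫ s in (0:ℝ)..T,
          ∑' h : {h : Z3 // h ≠ 0 ∧ h ≠ k},
            ((σ / (1 + α * nsq h.1))^2 * (projNorm h.1 k)^2) •
              (2 • (Pmat k * A (k - h.1) s * Pmat k)
                - Pmat k * Pmat (k - h.1) * A k s
                - A k s * Pmat (k - h.1) * Pmat k) := heq k hk T hTmem
      _ = ∫ s in Set.Ioc (0:ℝ) T,
          ∑' h : {h : Z3 // h ≠ 0 ∧ h ≠ k},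
            ((σ / (1 + α * nsq h.1))^2 * (projNorm h.1 k)^2) •
              (2 • (Pmat k * A (k - h.1) s * Pmat k)
                - Pmat k * Pmat (k - h.1) * A k s
                - A k s * Pmat (k - h.1) * Pmat k) := intervalIntegral.integral_of_le hT.le
      _ = ∑' h : {h : Z3 // h ≠ 0 ∧ h ≠ k},
          ∫ s in Set.Ioc (0:ℝ) T,
            ((σ / (1 + α * nsq h.1))^2 * (projNorm h.1 k)^2) •
              (2 • (Pmat k * A (k - h.1) s * Pmat k)
                - Pmat k * Pmat (k - h.1) * A k s
                - A k s * Pmat (k - h.1) * Pmat k) :=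
          MeasureTheory.integral_tsum hmeas hfin
      _ = ∑' h : {h : Z3 // h ≠ 0 ∧ h ≠ k},
          ((σ / (1 + α * nsq h.1))^2 * (projNorm h.1 k)^2) •
            (2 • (Pmat k * (∫ t in (0:ℝ)..T, A (k - h.1) t) * Pmat k)
              - Pmat k * Pmat (k - h.1) * (∫ t in (0:ℝ)..T, A k t)
              - (∫ t in (0:ℝ)..T, A k t) * Pmat (k - h.1) * Pmat k) := tsum_congr key
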